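/- arXiv:2602.10892 — 6 statements merged into one kernel-verified Lean document; each statement's English description precedes it below -/
import Mathlib

section
/- In the simultaneous alerting game with n ≥ 2 nodes and penalty λ > 0, if node i is offered bribe β_i ≥ λ(n−1), then NoAlert weakly dominates Alert for node i: for every number y ∈ {0,1,…,n−1} of other alerters, node i's payoff from NoAlert is at least its payoff from Alert. Moreover, the domination is strict if β_i > λ(n−1). -/
/-- NoAlert weakly dominates Alert when the bribe is at least `lam * (n-1)`,
and strictly dominates when the bribe is strictly larger.  Here `y` is the
number of other alerters; Alert pays `lam*(n-y-1)/(y+1)`, NoAlert pays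
`beta` if `y = 0` and `beta - lam` otherwise. -/
theorem noalert_dominance (n : ℕ) (hn : 2 ≤ n) (lam beta : ℝ) (hlam : 0 < lam)
    (hbeta : beta ≥ lam * ((n : ℝ) - 1)) :
    (∀ y : ℕ, y ≤ n - 1 →
      (if y = 0 then beta else beta - lam) ≥ lam * ((n : ℝ) - y - 1) / ((y : ℝ) + 1)) ∧
    (beta > lam * ((n : ℝ) - 1) → ∀ y : ℕ, y ≤ n - 1 →
      (if y = 0 then beta else beta - lam) > lam * ((n : ℝ) - y - 1) / ((y : ℝ) + 1)) := by
  have key : ∀ y : ℕ, y ≤ n - 1 →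
      lam * ((n : ℝ) - y - 1) / ((y : ℝ) + 1)
        ≤ lam * ((n : ℝ) - 1) - (if y = 0 then 0 else lam) := by
    intro y hy
    have hn2 : (2 : ℝ) ≤ (n : ℝ) := by exact_mod_cast hn
    have hpos : (0 : ℝ) < (y : ℝ) + 1 := by positivity
    rcases Nat.eq_zero_or_pos y with h0 | h1
    · subst h0; simp
    · have hy1 : (1 : ℝ) ≤ (y : ℝ) := by exact_mod_cast h1
      rw [if_neg (Nat.pos_iff_ne_zero.mp h1), div_le_iff₀ hpos]
      nlinarith [mul_nonneg hlam.le (show (0:ℝ) ≤ ((n:ℝ) - 1) * (y:ℝ) - 1 by nlinarith)]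
  constructor
  · intro y hy
    have hk := key y hy
    by_cases h : y = 0
    · subst h; rw [if_pos rfl] at hk ⊢; linarith
    · rw [if_neg h] at hk ⊢; linarith
  · intro hb y hy
    have hk := key y hy
    by_cases h : y = 0
    · subst h; rw [if_pos rfl] at hk ⊢; linarith
    · rw [if_neg h] at hk ⊢; linarith
end

section
/- Let n ≥ 2, λ > 0, and for each node i let q_i ∈ [0,1] be its probability of not alerting (independently), with Q = ∏_{j=1}^n q_j. Let Y_{−i} denote the (random) number of alerters among nodes other than i and Q_{−i} = ∏_{j≠i} q_j = Pr(Y_{−i} = 0). Suppose for each node i the mixed-equilibrium indifference condition holds: λ(n·E[1/(1+Y_{−i})] − 1) = β_i + λ·Q_{−i} − λ. Then ∑_{i=1}^n β_i·q_i ≥ λ·n(n−1)·Q. -/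
open Finset

/-- Lower bound on the adversary's expected bribe in any mixed equilibrium of
the simultaneous alerting game.  Each node `i` does not alert with probability
`q i`; `p i y` is the probability that `Y_{-i} = y` (the number of other
alerters), so `p i 0 = ∏_{j ≠ i} q j`.  The indifference condition equates the
expected Alert and NoAlert payoffs.  Then `∑ β_i q_i ≥ lam * n * (n-1) * Q`. -/
theorem expected_bribe_lower_bound (n : ℕ) (hn : 2 ≤ n) (lam : ℝ) (hlam : 0 < lam)
    (beta q : Fin n → ℝ) (p : Fin n → ℕ → ℝ)
    (hq : ∀ i, 0 ≤ q i ∧ q i ≤ 1)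
    (hp : ∀ i y, 0 ≤ p i y)
    (hpsum : ∀ i, ∑ y ∈ Finset.range n, p i y = 1)
    (hp0 : ∀ i, p i 0 = ∏ j ∈ Finset.univ.erase i, q j)
    (indiff : ∀ i, lam * ((n : ℝ) *
        (∑ y ∈ Finset.range n, (1 / ((y : ℝ) + 1)) * p i y) - 1)
      = beta i + lam * (∏ j ∈ Finset.univ.erase i, q j) - lam) :
    ∑ i, beta i * q i ≥ lam * (n : ℝ) * ((n : ℝ) - 1) * ∏ j, q j := by
  have key : ∀ i, lam * ((n : ℝ) - 1) * ∏ j, q j ≤ beta i * q i := by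
    intro i
    set Qi : ℝ := ∏ j ∈ Finset.univ.erase i, q j with hQi
    have hQi0 : 0 ≤ Qi := Finset.prod_nonneg fun j _ => (hq j).1
    have hEge : Qi ≤ ∑ y ∈ Finset.range n, (1 / ((y : ℝ) + 1)) * p i y := by
      have h0 : (0 : ℕ) ∈ Finset.range n := Finset.mem_range.mpr (by omega)
      have := Finset.single_le_sum
        (f := fun y : ℕ => (1 / ((y : ℝ) + 1)) * p i y)
        (fun y _ => mul_nonneg (by positivity) (hp i y)) h0
      simpa [hp0 i, hQi] using this
    have hbeta : beta i = lam * (n : ℝ) *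
        (∑ y ∈ Finset.range n, (1 / ((y : ℝ) + 1)) * p i y) - lam * Qi := by
      linear_combination -(indiff i)
    have hbge : lam * ((n : ℝ) - 1) * Qi ≤ beta i := by
      rw [hbeta]
      have hmul : lam * (n : ℝ) * Qi ≤ lam * (n : ℝ) *
          (∑ y ∈ Finset.range n, (1 / ((y : ℝ) + 1)) * p i y) := by
        apply mul_le_mul_of_nonneg_left hEge
        positivity
      nlinarith
    have hprod : Qi * q i = ∏ j, q j := Finset.prod_erase_mul _ _ (Finset.mem_univ i)
    calc lam * ((n : ℝ) - 1) * ∏ j, q j = (lam * ((n : ℝ) - 1) * Qi) * q i := by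
          rw [← hprod]; ring
      _ ≤ beta i * q i := mul_le_mul_of_nonneg_right hbge (hq i).1
  calc ∑ i, beta i * q i ≥ ∑ _i : Fin n, lam * ((n : ℝ) - 1) * ∏ j, q j :=
        Finset.sum_le_sum fun i _ => key i
    _ = lam * (n : ℝ) * ((n : ℝ) - 1) * ∏ j, q j := by
        simp [Finset.sum_const, Finset.card_univ]; ring
end

section
/- In the simultaneous alerting game with conditional bribes, if node i's offered bribe satisfies β_i < λ(n−1), then Alert dominates NoAlert for node i: when no other node alerts, Alert yields λ(n−1) > β_i; when at least one other node alerts, Alert yields λ·(n−1−y)/(y+1) ≥ 0 while NoAlert yields −λ < 0. -/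
/-- Conditional bribes: if `beta < lam*(n-1)`, Alert strictly dominates
NoAlert.  With `y` other alerters, Alert pays `lam*(n-1-y)/(y+1)`; NoAlert
pays `beta` if no one alerts (`y = 0`) and `-lam` otherwise. -/
theorem conditional_bribe_alert_dominance (n : ℕ) (hn : 2 ≤ n) (lam beta : ℝ)
    (hlam : 0 < lam) (hbeta : beta < lam * ((n : ℝ) - 1)) :
    ∀ y : ℕ, y ≤ n - 1 →
      lam * ((n : ℝ) - 1 - y) / ((y : ℝ) + 1) > (if y = 0 then beta else -lam) := by
  intro y hy
  have hycast : (y : ℝ) ≤ (n : ℝ) - 1 := by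
    have : ((y:ℕ):ℝ) ≤ ((n-1:ℕ):ℝ) := Nat.cast_le.mpr hy
    have h1 : ((n - 1 : ℕ) : ℝ) = (n : ℝ) - 1 := by
      have : 1 ≤ n := by omega
      push_cast [this]; ring
    linarith [h1 ▸ this]
  by_cases h0 : y = 0
  · subst h0
    norm_num
    linarith
  · simp only [if_neg h0]
    have hnum : 0 ≤ lam * ((n : ℝ) - 1 - y) := by
      apply mul_nonneg hlam.le
      linarith
    have hden : (0 : ℝ) < (y : ℝ) + 1 := by positivity
    have := div_nonneg hnum hden.le
    linarith
end

section
/- In the sequential alerting game, fix slot s ≤ n and suppose the nodes in slots 1,…,s−1 did not alert. In the subgame-perfect equilibrium determined by backward induction, the adversary can bribe the nodes in slots s,…,n to all not alert if and only if her remaining budget B(s) satisfies B(s) > ∑_{j=s}^{n} λ(j−1). In particular (s = 1), suppressing all alerts requires adversary gain G > λ·n(n−1)/2. -/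
open Finset

/-- Backward-induction characterization: given that slots `1, …, s-1` did not
alert and remaining budget `B`, the adversary can bribe the nodes in slots
`s, …, n` to all decline (each slot-`j` node declines iff its bribe exceeds its
alert reward `lam*(j-1)`, and the total bribe must fit in the budget) iff
`B > ∑_{j=s}^{n} lam*(j-1)`.  In particular for `s = 1` this threshold equals
`lam * n * (n-1) / 2`. -/
theorem sequential_backward_induction (n s : ℕ) (hs : 1 ≤ s) (hsn : s ≤ n)
    (lam B : ℝ) (hlam : 0 < lam) :
    ((∃ beta : ℕ → ℝ,
        (∀ j ∈ Finset.Icc s n, beta j > lam * ((j : ℝ) - 1)) ∧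
        ∑ j ∈ Finset.Icc s n, beta j ≤ B) ↔
      B > ∑ j ∈ Finset.Icc s n, lam * ((j : ℝ) - 1)) ∧
    (s = 1 → ∑ j ∈ Finset.Icc 1 n, lam * ((j : ℝ) - 1)
        = lam * (n : ℝ) * ((n : ℝ) - 1) / 2) := by
  have hne : (Finset.Icc s n).Nonempty := ⟨s, by simp [hsn]⟩
  constructor
  · constructor
    · rintro ⟨beta, hgt, hsum⟩
      exact lt_of_lt_of_le (Finset.sum_lt_sum_of_nonempty hne hgt) hsum
    · intro hB
      set S := ∑ j ∈ Finset.Icc s n, lam * ((j : ℝ) - 1) with hS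
      set c : ℝ := ((Finset.Icc s n).card : ℝ)
      have hc : 0 < c := by
        have := Finset.card_pos.mpr hne
        simp only [c]
        exact_mod_cast this
      refine ⟨fun j => lam * ((j : ℝ) - 1) + (B - S) / c, ?_, ?_⟩
      · intro j hj
        have : 0 < (B - S) / c := div_pos (by linarith) hc
        linarith
      · rw [Finset.sum_add_distrib, Finset.sum_const, nsmul_eq_mul]
        rw [← hS]
        have : c * ((B - S) / c) = B - S := mul_div_cancel₀ _ (ne_of_gt hc)
        rw [this]
        linarith
  · intro hs1
    clear hsn hne hs
    subst hs1
    induction n with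
    | zero => simp
    | succ m ih =>
      rw [Finset.sum_Icc_succ_top (by omega)]
      rw [ih]
      push_cast
      ring
end

section
/- In the simultaneous alerting game with operator cost c ≥ 0: if node i's bribe satisfies β_i ≥ λ(n−1) + c, then NoAlert weakly dominates Alert; in particular, for all n ≥ 2, λ(n−1) + c ≥ (λ·n + c)/2, which ensures β_i − λ ≥ (λ(n−2) + c)/2, the maximum Alert payoff when at least one other node alerts. -/
/-- With operator cost `c`: if `beta ≥ lam*(n-1) + c` then NoAlert weakly
dominates Alert.  In particular `lam*(n-1) + c ≥ (lam*n + c)/2` for `n ≥ 2`,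
which ensures `beta - lam ≥ (lam*(n-2) + c)/2`, the maximum Alert payoff when
at least one other node alerts. -/
theorem noalert_dominance_opcost (n : ℕ) (hn : 2 ≤ n) (lam c beta : ℝ)
    (hlam : 0 < lam) (hc : 0 ≤ c) (hbeta : beta ≥ lam * ((n : ℝ) - 1) + c) :
    (lam * ((n : ℝ) - 1) + c ≥ (lam * (n : ℝ) + c) / 2) ∧
    (beta - lam ≥ (lam * ((n : ℝ) - 2) + c) / 2) ∧
    (∀ y : ℕ, y ≤ n - 1 →
      (if y = 0 then beta else beta - lam)
        ≥ (lam * ((n : ℝ) - y - 1) + c) / ((y : ℝ) + 1)) := by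
  have hn2 : (2 : ℝ) ≤ (n : ℝ) := by exact_mod_cast hn
  refine ⟨by nlinarith, by nlinarith, ?_⟩
  intro y hy
  by_cases hy0 : y = 0
  · subst hy0
    simp only [if_pos rfl, Nat.cast_zero]
    rw [ge_iff_le, div_le_iff₀ (by norm_num)]
    simp only [if_true]
    nlinarith
  · have hy1 : (1 : ℝ) ≤ (y : ℝ) := by
      exact_mod_cast Nat.one_le_iff_ne_zero.mpr hy0
    simp only [if_neg hy0]
    rw [ge_iff_le, div_le_iff₀ (by linarith)]
    nlinarith [mul_nonneg (sub_nonneg.mpr hy1) hc,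
      mul_nonneg (mul_nonneg hlam.le (sub_nonneg.mpr hy1)) (by linarith : (0:ℝ) ≤ (n:ℝ) - 2)]
end

section
/- In the simultaneous alerting game with operator cost c ≥ 0: if node i's bribe satisfies β_i ≤ λ + c/n, then Alert weakly dominates NoAlert for node i; in particular, for y ≥ 1 other alerters, the Alert payoff (λ(n−1−y)+c)/(y+1) is at least c/n while the NoAlert payoff β_i − λ is at most c/n, and for y = 0, λ(n−1) + c ≥ β_i. -/
/-- With operator cost `c`: if `beta ≤ lam + c/n` then Alert weakly dominates
NoAlert.  For `y ≥ 1` other alerters the Alert payoff is at least `c/n` while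
the NoAlert payoff `beta - lam` is at most `c/n`; for `y = 0`,
`lam*(n-1) + c ≥ beta`. -/
theorem alert_dominance_opcost (n : ℕ) (hn : 2 ≤ n) (lam c beta : ℝ)
    (hlam : 0 < lam) (hc : 0 ≤ c) (hbeta : beta ≤ lam + c / n) :
    (∀ y : ℕ, 1 ≤ y → y ≤ n - 1 →
      (lam * ((n : ℝ) - 1 - y) + c) / ((y : ℝ) + 1) ≥ c / n ∧ beta - lam ≤ c / n) ∧
    (lam * ((n : ℝ) - 1) + c ≥ beta) ∧
    (∀ y : ℕ, y ≤ n - 1 →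
      (lam * ((n : ℝ) - 1 - y) + c) / ((y : ℝ) + 1)
        ≥ (if y = 0 then beta else beta - lam)) := by
  have hn0 : (0:ℝ) < n := by positivity
  have hn2 : (2:ℝ) ≤ n := by exact_mod_cast hn
  have hcn : c / n ≤ c := by
    rw [div_le_iff₀ hn0]
    nlinarith
  have hbl : beta - lam ≤ c / n := by linarith
  have key : ∀ y : ℕ, y ≤ n - 1 →
      (lam * ((n : ℝ) - 1 - y) + c) / ((y : ℝ) + 1) ≥ c / n := by
    intro y hy
    have hy' : (y:ℝ) ≤ (n:ℝ) - 1 := by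
      have : (y:ℝ) ≤ ((n-1 : ℕ) : ℝ) := by exact_mod_cast hy
      have : ((n-1 : ℕ) : ℝ) = (n:ℝ) - 1 := by
        have h1 : 1 ≤ n := by omega
        push_cast [h1]; ring
      linarith [this ▸ ‹(y:ℝ) ≤ ((n-1:ℕ):ℝ)›]
    have hy1 : (0:ℝ) < (y:ℝ) + 1 := by positivity
    have h1 : c / n ≤ c / ((y:ℝ) + 1) :=
      div_le_div_of_nonneg_left hc hy1 (by linarith)
    have h2 : c / ((y:ℝ) + 1) ≤ (lam * ((n : ℝ) - 1 - y) + c) / ((y : ℝ) + 1) := by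
      gcongr
      nlinarith
    linarith
  refine ⟨fun y _ hy => ⟨key y hy, hbl⟩, by nlinarith, fun y hy => ?_⟩
  by_cases h0 : y = 0
  · subst h0
    simp only [if_pos rfl, Nat.cast_zero, sub_zero]
    have h : (lam * ((n : ℝ) - 1) + c) / ((0:ℝ) + 1) = lam * ((n:ℝ) - 1) + c := by ring
    rw [h, if_pos trivial]
    nlinarith
  · rw [if_neg h0]
    have := key y hy
    linarith
end
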